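/- arXiv:2603.26305 — 3 statements merged into one kernel-verified Lean document; each statement's English description precedes it below -/
import Mathlib

section
/- For every δ > 0 there exists a finite nonempty set X ⊆ S such that X is a homogeneous δ-solution of (VCP), i.e. d_tH(hom(conv(F[X]) + C), hom 𝒫) ≤ δ. -/
/-!
The homogenization of the upper image is a closed cone, so its part in the unit ball is
compact. An element of the conic hull of `lift1 '' (F[S] + C)` is a finite conic combination,
hence already lies in the conic hull coming from finitely many points of `S`; since the cones
for finite `X ⊆ S` form a directed family and the radial retraction onto the ball keeps each of
them, their truncations are dense in the truncation of `hom 𝒫`, and compactness yields one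
finite `X` that is `δ`-dense. Convexification does not change a homogenization, so `F[X]` may be
replaced by `conv F[X]`.
-/

open Metric Set Pointwise

noncomputable section

/-- `ℝ^m` as a Euclidean space. -/
abbrev Em (m : ℕ) := EuclideanSpace ℝ (Fin m)

/-- `ℝ^(m+1)` realized as the L²-product `ℝ^m × ℝ`. -/
abbrev Em1 (m : ℕ) := WithLp 2 (Em m × ℝ)

/-- The conic hull: all finite nonnegative combinations of elements of `M`. -/
def coneHull {V : Type*} [AddCommMonoid V] [Module ℝ V] (M : Set V) : Set V :=
  {x | ∃ (k : ℕ) (c : Fin k → ℝ) (v : Fin k → V),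
    (∀ i, 0 ≤ c i) ∧ (∀ i, v i ∈ M) ∧ x = ∑ i, c i • v i}

/-- The vector `(y, 1) ∈ ℝ^(m+1)` obtained by appending a last coordinate `1` to `y`. -/
def lift1 {m : ℕ} (y : Em m) : Em1 m := (WithLp.equiv 2 (Em m × ℝ)).symm (y, 1)

/-- The homogenization `hom Z = cl (cone (Z × {1}))` of a set `Z ⊆ ℝ^m`. -/
def homog {m : ℕ} (Z : Set (Em m)) : Set (Em1 m) := closure (coneHull (lift1 '' Z))

/-- The truncated Hausdorff distance `d_tH(K₁, K₂) = d_H(K₁ ∩ 𝔹, K₂ ∩ 𝔹)`. -/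
def dtH {V : Type*} [NormedAddCommGroup V] (K₁ K₂ : Set V) : ℝ :=
  hausdorffDist (K₁ ∩ closedBall 0 1) (K₂ ∩ closedBall 0 1)

theorem coneHull_eq_hull {V : Type*} [AddCommMonoid V] [Module ℝ V] (M : Set V) :
    coneHull M = PointedCone.hull ℝ M := by
  ext x
  rw [SetLike.mem_coe, Submodule.mem_span_set']
  constructor
  · rintro ⟨k, c, v, hc, hv, rfl⟩
    exact ⟨k, fun i => ⟨c i, hc i⟩, fun i => ⟨v i, hv i⟩, rfl⟩
  · rintro ⟨k, c, v, rfl⟩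
    exact ⟨k, fun i => c i, fun i => v i, fun i => (c i).2, fun i => (v i).2, rfl⟩

section Metric

variable {α : Type*}

theorem IsCompact.exists_subset_thickening_of_directed [PseudoEMetricSpace α] {ι : Type*}
    [Nonempty ι] {Q : Set α} {A : ι → Set α} (hQ : IsCompact Q) (hA : Directed (· ⊆ ·) A)
    (hQA : Q ⊆ closure (⋃ i, A i)) {ε : ℝ} (hε : 0 < ε) :
    ∃ i, Q ⊆ thickening ε (A i) :=
  hQ.elim_directed_cover _ (fun _ => isOpen_thickening)
    (hQA.trans <| (closure_subset_thickening hε _).trans (thickening_iUnion ε A).subset)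
    (hA.mono_comp _ (g := thickening ε) fun _ _ h => thickening_subset_of_subset ε h)

theorem hausdorffDist_le_of_subset_of_subset_thickening [PseudoMetricSpace α] {s t : Set α}
    {δ : ℝ} (hδ : 0 ≤ δ) (hst : s ⊆ t) (hts : t ⊆ thickening δ s) :
    hausdorffDist s t ≤ δ := by
  refine hausdorffDist_le_of_mem_dist hδ (fun x hx => ⟨x, hst hx, by simpa using hδ⟩) ?_
  intro x hx
  obtain ⟨y, hy, hxy⟩ := mem_thickening_iff.1 (hts hx)
  exact ⟨y, hy, hxy.le⟩

end Metric

theorem PointedCone.closure_inter_closedBall_subset {E : Type*} [NormedAddCommGroup E]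
    [NormedSpace ℝ E] (P : PointedCone ℝ E) :
    closure (P : Set E) ∩ closedBall 0 1 ⊆ closure (P ∩ closedBall 0 1) := by
  set f : E → E := fun w => (max 1 ‖w‖)⁻¹ • w
  have hpos : ∀ w : E, 0 < max 1 ‖w‖ := fun w => zero_lt_one.trans_le (le_max_left _ _)
  have hf : Continuous f :=
    ((continuous_const.max continuous_norm).inv₀ fun w => (hpos w).ne').smul continuous_id
  have hfP : f '' P ⊆ P ∩ closedBall 0 1 := by
    rintro _ ⟨w, hw, rfl⟩
    refine ⟨P.smul_mem (inv_nonneg.2 (hpos w).le) hw, ?_⟩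
    rw [mem_closedBall_zero_iff, norm_smul, norm_inv, Real.norm_of_nonneg (hpos w).le,
      inv_mul_le_iff₀ (hpos w), mul_one]
    exact le_max_right _ _
  rintro z ⟨hz, hzB⟩
  have hfz : f z = z := by
    simp only [f, max_eq_left (mem_closedBall_zero_iff.1 hzB), inv_one, one_smul]
  rw [← hfz]
  exact closure_mono hfP (image_closure_subset_closure_image hf ⟨z, hz, rfl⟩)

section Homogenization

variable {m : ℕ}

def lift1AffineMap (m : ℕ) : Em m →ᵃ[ℝ] Em1 m :=
  (WithLp.linearEquiv 2 ℝ (Em m × ℝ)).symm.toLinearMap.toAffineMap.comp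
    ((AffineMap.id ℝ (Em m)).prod (AffineMap.const ℝ (Em m) (1 : ℝ)))

theorem coe_lift1AffineMap : ⇑(lift1AffineMap m) = lift1 := rfl

theorem continuous_lift1 : Continuous (lift1 (m := m)) :=
  coe_lift1AffineMap ▸ (lift1AffineMap m).continuous_of_finiteDimensional

theorem homog_eq_closure_hull (Z : Set (Em m)) :
    homog Z = closure (PointedCone.hull ℝ (lift1 '' Z) : Set (Em1 m)) := by
  rw [homog, coneHull_eq_hull]

theorem isCompact_homog_inter_closedBall (Z : Set (Em m)) :
    IsCompact (homog Z ∩ closedBall 0 1) :=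
  (isCompact_closedBall _ _).inter_left isClosed_closure

theorem homog_mono {Z Z' : Set (Em m)} (h : Z ⊆ Z') : homog Z ⊆ homog Z' := by
  simp only [homog_eq_closure_hull]
  exact closure_mono (Submodule.span_mono (image_mono h))

theorem homog_closure (Z : Set (Em m)) : homog (closure Z) = homog Z := by
  refine (homog_mono subset_closure).antisymm' ?_
  simp only [homog_eq_closure_hull, ← Submodule.topologicalClosure_coe]
  refine closure_minimal (Submodule.span_le.2 ?_) (Submodule.isClosed_topologicalClosure _)
  exact (image_closure_subset_closure_image continuous_lift1).trans
    (closure_mono Submodule.subset_span)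

theorem homog_convexHull (Z : Set (Em m)) : homog (convexHull ℝ Z) = homog Z := by
  refine (homog_mono (subset_convexHull ℝ Z)).antisymm' ?_
  simp only [homog_eq_closure_hull]
  refine closure_mono (Submodule.span_le.2 ?_)
  rw [← coe_lift1AffineMap, AffineMap.image_convexHull]
  exact convexHull_min Submodule.subset_span (PointedCone.convex _)

theorem homog_convexHull_add (Z C : Set (Em m)) :
    homog (convexHull ℝ Z + C) = homog (Z + C) := by
  refine (homog_mono (add_subset_add_right (subset_convexHull ℝ Z))).antisymm' ?_
  calc homog (convexHull ℝ Z + C) ⊆ homog (convexHull ℝ (Z + C)) := by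
        rw [convexHull_add]; exact homog_mono (add_subset_add_left (subset_convexHull ℝ C))
    _ = homog (Z + C) := homog_convexHull _

theorem homog_iUnion_inter_closedBall_subset {ι : Type*} [Nonempty ι] {Z : ι → Set (Em m)}
    (hZ : Directed (· ⊆ ·) Z) :
    homog (⋃ i, Z i) ∩ closedBall 0 1 ⊆ closure (⋃ i, homog (Z i) ∩ closedBall 0 1) := by
  rw [homog_eq_closure_hull, image_iUnion, PointedCone.hull, Submodule.span_iUnion]
  refine (PointedCone.closure_inter_closedBall_subset _).trans (closure_mono ?_)
  have hdir : Directed (· ≤ ·) fun i => PointedCone.hull ℝ (lift1 '' Z i) :=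
    hZ.mono_comp _ (g := fun s => PointedCone.hull ℝ (lift1 '' s))
      fun _ _ h => Submodule.span_mono (image_mono h)
  rw [Submodule.coe_iSup_of_directed _ hdir, iUnion_inter]
  exact iUnion_mono fun i =>
    inter_subset_inter_left _ (homog_eq_closure_hull (Z i) ▸ subset_closure)

end Homogenization

theorem exists_finite_homogeneous_delta_solution_general
    {n m : ℕ} (S : Set (Em n)) (hSne : S.Nonempty)
    (C : Set (Em m))
    (F : Em n → Em m)
    (δ : ℝ) (hδ : 0 < δ) :
    ∃ X : Set (Em n), X.Finite ∧ X.Nonempty ∧ X ⊆ S ∧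
      dtH (homog (convexHull ℝ (F '' X) + C)) (homog (closure (F '' S + C))) ≤ δ := by
  let ι := {X : Set (Em n) // X.Finite ∧ X.Nonempty ∧ X ⊆ S}
  let singleton (x : Em n) (hx : x ∈ S) : ι :=
    ⟨{x}, finite_singleton x, singleton_nonempty x, singleton_subset_iff.2 hx⟩
  have : Nonempty ι := ⟨singleton _ hSne.some_mem⟩
  have hdir : Directed (· ⊆ ·) fun X : ι => F '' X.1 + C := fun X Y =>
    ⟨⟨X.1 ∪ Y.1, X.2.1.union Y.2.1, X.2.2.1.inl, union_subset X.2.2.2 Y.2.2.2⟩,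
      add_subset_add_right (image_mono subset_union_left),
      add_subset_add_right (image_mono subset_union_right)⟩
  have hunion : F '' S + C = ⋃ X : ι, F '' X.1 + C := by
    refine (iUnion_subset fun X => add_subset_add_right (image_mono X.2.2.2)).antisymm' ?_
    rintro _ ⟨_, ⟨x, hx, rfl⟩, c, hc, rfl⟩
    exact mem_iUnion.2 ⟨singleton x hx, add_mem_add (mem_image_of_mem F rfl) hc⟩
  obtain ⟨⟨X, hXfin, hXne, hXS⟩, hX⟩ :=
    (isCompact_homog_inter_closedBall (closure (F '' S + C))).exists_subset_thickening_of_directed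
      (A := fun X : ι => homog (F '' X.1 + C) ∩ closedBall 0 1)
      (hdir.mono_comp _ fun _ _ h => inter_subset_inter_left _ (homog_mono h))
      (by rw [homog_closure, hunion]; exact homog_iUnion_inter_closedBall_subset hdir) hδ
  have hXsub : F '' X + C ⊆ closure (F '' S + C) :=
    (add_subset_add_right (image_mono hXS)).trans subset_closure
  refine ⟨X, hXfin, hXne, hXS, ?_⟩
  rw [dtH, homog_convexHull_add]
  exact hausdorffDist_le_of_subset_of_subset_thickening hδ.le
    (inter_subset_inter_left _ (homog_mono hXsub)) hX

/-- For every `δ > 0` there exists a finite nonempty `X ⊆ S` which is a homogeneous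
`δ`-solution of (VCP), i.e. `d_tH(hom (conv F[X] + C), hom 𝒫) ≤ δ` where
`𝒫 = cl (F[S] + C)` is the upper image. -/
theorem exists_finite_homogeneous_delta_solution
    {n m : ℕ} (S : Set (Em n)) (hSne : S.Nonempty) (hSconv : Convex ℝ S)
    (C : Set (Em m)) (hC0 : (0 : Em m) ∈ C)
    (hCcone : ∀ c ∈ C, ∀ r : ℝ, 0 ≤ r → r • c ∈ C)
    (hCconv : Convex ℝ C) (hCclosed : IsClosed C)
    (hCpointed : C ∩ (-C) ⊆ {0}) (hCnontrivial : C ≠ {0})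
    (F : Em n → Em m)
    (hFconv : ∀ x₁ x₂ : Em n, ∀ l : ℝ, l ∈ Set.Ioo (0:ℝ) 1 →
      l • F x₁ + (1 - l) • F x₂ - F (l • x₁ + (1 - l) • x₂) ∈ C)
    (δ : ℝ) (hδ : 0 < δ) :
    ∃ X : Set (Em n), X.Finite ∧ X.Nonempty ∧ X ⊆ S ∧
      dtH (homog (convexHull ℝ (F '' X) + C)) (homog (closure (F '' S + C))) ≤ δ :=
  exists_finite_homogeneous_delta_solution_general S hSne C F δ hδ
end
end

section
/- Let δ ∈ (0,1), let X ⊆ S be a homogeneous δ-solution of (VCP) with approximate upper image P_X := conv(F[X]) + C, and let y ∈ bd P_X. Then at least one of the following holds: (i) there exists n ∈ bd 𝒫 such that, setting q := d((n,1)/‖(n,1)‖, cone{(y,1)}), one has q·√(‖y‖² + 1) < 1 and d(y, bd 𝒫) ≤ q(‖y‖² + 1)/(√(1 − q²) − q‖y‖); or (ii) y ≠ 0 and d(y/‖y‖, 0⁺𝒫) ≤ (‖(y,1)‖/‖y‖)·δ. -/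
/-!
By `C`-convexity `P_X ⊆ 𝒫`, so `y ∈ 𝒫`. If some `n ∈ bd 𝒫` satisfies `q · ‖(y,1)‖ < 1`, then
`q` is the sine of the angle between `(n,1)` and `(y,1)`, and plane trigonometry in `ℝ^(m+1)`,
using that both vectors lie on the hyperplane of last coordinate `1`, bounds `‖y - n‖` as in (i).
Otherwise the open convex set of those `x` for which `(x,1)` satisfies this angle condition with
respect to `(y,1)` contains `y` and misses `bd 𝒫`, hence lies in `𝒫`. For `y ≠ 0` it contains the
ray `{c • y : c ≥ 1}`, so `y / ‖y‖` is a recession direction of `𝒫` and (ii) holds with distance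
`0`. For `y = 0` it is all of `ℝ^m`, so `𝒫 = ℝ^m`; a supporting half-space `⟪w, ·⟫ ≤ 0` of `P_X`
at `0` then keeps the unit vector `(w/‖w‖, 0) ∈ hom 𝒫` at distance `≥ 1` from `hom P_X`,
contradicting `d_tH ≤ δ < 1`.
-/

open Metric Set Pointwise

noncomputable section

/-- The ray `cone {v} = {λ • v : λ ≥ 0}`. -/
def ray {V : Type*} [AddCommMonoid V] [Module ℝ V] (v : V) : Set V :=
  {x | ∃ l : ℝ, 0 ≤ l ∧ x = l • v}

/-- The recession cone `0⁺Z = {z : x + λz ∈ Z for all x ∈ Z, λ ≥ 0}`. -/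
def recCone {V : Type*} [AddCommMonoid V] [Module ℝ V] (Z : Set V) : Set V :=
  {z | ∀ x ∈ Z, ∀ r : ℝ, 0 ≤ r → x + r • z ∈ Z}

open Filter Topology
open scoped RealInnerProductSpace

theorem zero_mem_ray {V : Type*} [AddCommMonoid V] [Module ℝ V] (v : V) : (0 : V) ∈ ray v :=
  ⟨0, le_rfl, (zero_smul ℝ v).symm⟩

section InnerProductSpace

variable {E : Type*} [NormedAddCommGroup E] [InnerProductSpace ℝ E]

theorem one_le_infDist_of_forall_inner_nonpos {u : E} {K : Set E} (hu : ‖u‖ = 1)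
    (hK : K.Nonempty) (h : ∀ v ∈ K, ⟪u, v⟫ ≤ 0) : 1 ≤ infDist u K := by
  refine (le_infDist hK).2 fun v hv => ?_
  calc (1 : ℝ) ≤ ⟪u, u - v⟫ := by
        rw [inner_sub_right, real_inner_self_eq_norm_sq, hu]; linarith [h v hv]
    _ ≤ ‖u‖ * ‖u - v‖ := real_inner_le_norm _ _
    _ = dist u v := by rw [hu, one_mul, dist_eq_norm]

theorem infDist_ray_eq {u v : E} (hu : ‖u‖ = 1) (h : 0 < ⟪u, v⟫) :
    infDist u (ray v) = √(1 - (⟪u, v⟫ / ‖v‖) ^ 2) := by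
  have hv : ‖v‖ ≠ 0 := fun hv => by
    rw [norm_eq_zero.1 hv, inner_zero_right] at h; exact h.false
  have hdist : ∀ l : ℝ, dist u (l • v) ^ 2
      = (1 - (⟪u, v⟫ / ‖v‖) ^ 2) + (l * ‖v‖ - ⟪u, v⟫ / ‖v‖) ^ 2 := fun l => by
    rw [dist_eq_norm, norm_sub_sq_real, hu, real_inner_smul_right, norm_smul,
      Real.norm_eq_abs, mul_pow, sq_abs]
    field_simp
    ring
  refine le_antisymm ?_ ((le_infDist ⟨0, zero_mem_ray v⟩).2 ?_)
  · have hmem : (⟪u, v⟫ / ‖v‖ ^ 2) • v ∈ ray v := ⟨_, by positivity, rfl⟩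
    refine (infDist_le_dist_of_mem hmem).trans_eq ?_
    rw [← Real.sqrt_sq dist_nonneg, hdist]
    congr 1
    field_simp
    ring
  · intro w hw
    obtain ⟨l, -, rfl⟩ := hw
    rw [← Real.sqrt_sq dist_nonneg, hdist]
    exact Real.sqrt_le_sqrt (le_add_of_nonneg_right (sq_nonneg _))

theorem sq_infDist_ray {u v : E} (hu : ‖u‖ = 1) (h : 0 < ⟪u, v⟫) :
    infDist u (ray v) ^ 2 = 1 - (⟪u, v⟫ / ‖v‖) ^ 2 := by
  have hv : 0 < ‖v‖ := norm_pos_iff.2 fun hv => by simp [hv] at h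
  have hle : ⟪u, v⟫ ≤ ‖v‖ := by simpa [hu] using real_inner_le_norm u v
  rw [infDist_ray_eq hu h, Real.sq_sqrt]
  rw [div_pow, sub_nonneg, div_le_one (by positivity)]
  nlinarith

theorem infDist_ray_mul_norm_lt_one {u v : E} {r : ℝ} (hu : ‖u‖ = 1)
    (hv : ‖v‖ ^ 2 = r ^ 2 + 1) (hr : 0 ≤ r) (h : r < ⟪u, v⟫) :
    infDist u (ray v) * ‖v‖ < 1 := by
  have hv0 : ‖v‖ ≠ 0 := fun h0 => by rw [h0] at hv; nlinarith
  refine lt_of_pow_lt_pow_left₀ 2 zero_le_one ?_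
  rw [mul_pow, sq_infDist_ray hu (hr.trans_lt h)]
  field_simp
  nlinarith

theorem sq_infDist_normalize_ray {N Y : E} (hN : N ≠ 0)
    (hq : infDist (‖N‖⁻¹ • N) (ray Y) < 1) :
    0 < ⟪N, Y⟫ ∧ infDist (‖N‖⁻¹ • N) (ray Y) ^ 2 = 1 - (⟪N, Y⟫ / (‖N‖ * ‖Y‖)) ^ 2 := by
  have hu : ‖‖N‖⁻¹ • N‖ = 1 := norm_smul_inv_norm (𝕜 := ℝ) hN
  have hpos : 0 < ⟪‖N‖⁻¹ • N, Y⟫ := by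
    by_contra! h
    refine (one_le_infDist_of_forall_inner_nonpos hu ⟨0, zero_mem_ray Y⟩ fun v hv => ?_).not_gt hq
    obtain ⟨l, hl, rfl⟩ := hv
    rw [real_inner_smul_right]
    exact mul_nonpos_of_nonneg_of_nonpos hl h
  rw [sq_infDist_ray hu hpos, real_inner_smul_left, inv_mul_eq_div, div_div]
  rw [real_inner_smul_left] at hpos
  exact ⟨pos_of_mul_pos_right hpos (inv_nonneg.2 (norm_nonneg N)), rfl⟩

theorem sq_inner_sub_norm_sq_le {e N Y : E} (he : ‖e‖ = 1) (hN : ⟪N, e⟫ = 1) (hY : ⟪Y, e⟫ = 1) :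
    (⟪N, Y⟫ - ‖Y‖ ^ 2) ^ 2 ≤ (‖N‖ ^ 2 * ‖Y‖ ^ 2 - ⟪N, Y⟫ ^ 2) * (‖Y‖ ^ 2 - 1) := by
  have hY0 : 0 < ‖Y‖ := norm_pos_iff.2 fun h => by simp [h] at hY
  -- Cauchy–Schwarz for `‖Y‖²` times the components of `N` and `-e` orthogonal to `Y`
  have hcs := real_inner_mul_inner_self_le (‖Y‖ ^ 2 • N - ⟪N, Y⟫ • Y) (Y - ‖Y‖ ^ 2 • e)
  simp only [inner_sub_left, inner_sub_right, inner_smul_left, inner_smul_right,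
    conj_trivial, real_inner_self_eq_norm_sq, real_inner_comm N, real_inner_comm Y e, hN, hY,
    he] at hcs
  have hY4 : 0 < ‖Y‖ ^ 4 := by positivity
  nlinarith

theorem norm_sub_le_of_inner_eq_one {e N Y : E} {q r : ℝ} (he : ‖e‖ = 1) (hN : ⟪N, e⟫ = 1)
    (hY : ⟪Y, e⟫ = 1) (hYr : ‖Y‖ ^ 2 = r ^ 2 + 1) (hr : 0 ≤ r)
    (hq : infDist (‖N‖⁻¹ • N) (ray Y) = q) (hqY : q * ‖Y‖ < 1) :
    ‖N - Y‖ ≤ q * (r ^ 2 + 1) / (√(1 - q ^ 2) - q * r) := by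
  have hY1 : 1 ≤ ‖Y‖ := by simpa [he, hY] using real_inner_le_norm Y e
  have hN0 : N ≠ 0 := fun h => by simp [h] at hN
  have hq0 : 0 ≤ q := hq ▸ infDist_nonneg
  obtain ⟨hpos, hqc⟩ :=
    sq_infDist_normalize_ray hN0 (hq ▸ (le_mul_of_one_le_right hq0 hY1).trans_lt hqY)
  -- `c` is the cosine of the angle between `N` and `Y`, and `q` its sine
  set c := ⟪N, Y⟫ / (‖N‖ * ‖Y‖) with hc
  rw [hq] at hqc
  have hc0 : 0 ≤ c := by positivity
  have hsqrt : √(1 - q ^ 2) = c := by rw [hqc, sub_sub_cancel, Real.sqrt_sq hc0]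
  have hNY : ⟪N, Y⟫ = c * ‖N‖ * ‖Y‖ := by
    rw [hc]
    field_simp
  clear_value c
  have hdist : ‖N - Y‖ ^ 2 = (‖N‖ * q) ^ 2 + (c * ‖N‖ - ‖Y‖) ^ 2 := by
    rw [norm_sub_sq_real, hNY]
    linear_combination -‖N‖ ^ 2 * hqc
  have hcs : (c * ‖N‖ - ‖Y‖) ^ 2 ≤ (‖N‖ * q * r) ^ 2 := by
    have h := sq_inner_sub_norm_sq_le he hN hY
    rw [hNY, show ‖Y‖ ^ 2 - 1 = r ^ 2 by linarith] at h
    refine le_of_mul_le_mul_left ?_ (by positivity : 0 < ‖Y‖ ^ 2)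
    linear_combination h - ‖N‖ ^ 2 * ‖Y‖ ^ 2 * r ^ 2 * hqc
  have hd : ‖N - Y‖ ≤ ‖N‖ * q * ‖Y‖ := by
    refine le_of_sq_le_sq ?_ (by positivity)
    rw [hdist, mul_pow _ ‖Y‖, hYr]
    nlinarith
  have hden : q * r < c := by
    refine lt_of_pow_lt_pow_left₀ 2 hc0 ?_
    nlinarith [mul_self_lt_mul_self (by positivity) hqY]
  have hN : ‖N‖ * (c - q * r) ≤ ‖Y‖ := by
    nlinarith [le_of_sq_le_sq hcs (by positivity)]
  rw [hsqrt, ← hYr, le_div_iff₀ (sub_pos.2 hden)]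
  calc ‖N - Y‖ * (c - q * r) ≤ ‖N‖ * q * ‖Y‖ * (c - q * r) :=
        mul_le_mul_of_nonneg_right hd (sub_pos.2 hden).le
    _ = q * ‖Y‖ * (‖N‖ * (c - q * r)) := by ring
    _ ≤ q * ‖Y‖ * ‖Y‖ := mul_le_mul_of_nonneg_left hN (by positivity)
    _ = q * ‖Y‖ ^ 2 := by ring

end InnerProductSpace

section Lift

variable {m : ℕ}

def lift0 (y : Em m) : Em1 m := (WithLp.equiv 2 (Em m × ℝ)).symm (y, 0)

theorem inner_lift1_lift1 (a b : Em m) : ⟪lift1 a, lift1 b⟫ = ⟪a, b⟫ + 1 := by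
  simp [lift1, WithLp.prod_inner_apply]

theorem inner_lift0_lift1 (a b : Em m) : ⟪lift0 a, lift1 b⟫ = ⟪a, b⟫ := by
  simp [lift0, lift1, WithLp.prod_inner_apply]

theorem norm_lift1_sq (a : Em m) : ‖lift1 a‖ ^ 2 = ‖a‖ ^ 2 + 1 := by
  rw [← real_inner_self_eq_norm_sq, inner_lift1_lift1, real_inner_self_eq_norm_sq]

theorem norm_lift1 (a : Em m) : ‖lift1 a‖ = √(‖a‖ ^ 2 + 1) := by
  rw [← norm_lift1_sq, Real.sqrt_sq (norm_nonneg _)]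

theorem norm_lift0 (a : Em m) : ‖lift0 a‖ = ‖a‖ := by
  simp [lift0]

theorem lift1_sub_lift1 (a b : Em m) : lift1 a - lift1 b = lift0 (a - b) := by
  simp [lift1, lift0, ← WithLp.toLp_sub]

theorem lift1_smul_add_smul {a b : ℝ} (hab : a + b = 1) (x₁ x₂ : Em m) :
    lift1 (a • x₁ + b • x₂) = a • lift1 x₁ + b • lift1 x₂ := by
  simp [lift1, ← WithLp.toLp_smul, ← WithLp.toLp_add, hab]

theorem dist_le_of_infDist_ray_mul_lt_one {y x : Em m} {q : ℝ}
    (hq : infDist (‖lift1 x‖⁻¹ • lift1 x) (ray (lift1 y)) = q) (hqy : q * √(‖y‖ ^ 2 + 1) < 1) :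
    dist y x ≤ q * (‖y‖ ^ 2 + 1) / (√(1 - q ^ 2) - q * ‖y‖) := by
  rw [dist_comm, dist_eq_norm, ← norm_lift0, ← lift1_sub_lift1]
  rw [← norm_lift1] at hqy
  have he : ‖lift1 (0 : Em m)‖ = 1 := by simp [norm_lift1]
  have h1 (a : Em m) : ⟪lift1 a, lift1 0⟫ = 1 := by
    rw [inner_lift1_lift1, inner_zero_right, zero_add]
  exact norm_sub_le_of_inner_eq_one he (h1 x) (h1 y) (norm_lift1_sq y) (norm_nonneg y) hq hqy

end Lift

section AngularNbhd

variable {m : ℕ}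

/-- The points `x` such that the angle between `(x,1)` and `(y,1)` is smaller than the elevation
of `(y,1)` above `ℝ^m × {0}`. -/
def angularNbhd (y : Em m) : Set (Em m) := {x | ‖y‖ * ‖lift1 x‖ < ⟪lift1 x, lift1 y⟫}

theorem convex_angularNbhd (y : Em m) : Convex ℝ (angularNbhd y) := by
  refine convex_iff_forall_pos.2 fun x₁ h₁ x₂ h₂ a b ha hb hab => ?_
  show ‖y‖ * ‖lift1 (a • x₁ + b • x₂)‖ < ⟪lift1 (a • x₁ + b • x₂), lift1 y⟫
  rw [lift1_smul_add_smul hab, inner_add_left, real_inner_smul_left, real_inner_smul_left]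
  calc ‖y‖ * ‖a • lift1 x₁ + b • lift1 x₂‖ ≤ a * (‖y‖ * ‖lift1 x₁‖) + b * (‖y‖ * ‖lift1 x₂‖) := by
        refine (mul_le_mul_of_nonneg_left (norm_add_le _ _) (norm_nonneg y)).trans_eq ?_
        rw [norm_smul, norm_smul, Real.norm_of_nonneg ha.le, Real.norm_of_nonneg hb.le]
        ring
    _ < a * ⟪lift1 x₁, lift1 y⟫ + b * ⟪lift1 x₂, lift1 y⟫ :=
        add_lt_add (mul_lt_mul_of_pos_left h₁ ha) (mul_lt_mul_of_pos_left h₂ hb)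

theorem smul_mem_angularNbhd (y : Em m) {c : ℝ} (hc : 1 / 2 ≤ c) :
    c • y ∈ angularNbhd y := by
  have hinner : ⟪lift1 (c • y), lift1 y⟫ = c * ‖y‖ ^ 2 + 1 := by
    rw [inner_lift1_lift1, real_inner_smul_left, real_inner_self_eq_norm_sq]
  show ‖y‖ * ‖lift1 (c • y)‖ < _
  rw [hinner]
  refine lt_of_pow_lt_pow_left₀ 2 (by positivity) ?_
  rw [mul_pow, norm_lift1_sq, norm_smul, Real.norm_eq_abs, abs_of_nonneg (by linarith)]
  nlinarith [sq_nonneg ‖y‖]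

theorem angularNbhd_zero : angularNbhd (0 : Em m) = univ :=
  eq_univ_of_forall fun x => by
    show ‖(0 : Em m)‖ * ‖lift1 x‖ < _
    rw [inner_lift1_lift1, norm_zero, zero_mul, inner_zero_right, zero_add]
    exact one_pos

theorem infDist_ray_mul_lt_one_of_mem_angularNbhd {y x : Em m} (hx : x ∈ angularNbhd y) :
    infDist (‖lift1 x‖⁻¹ • lift1 x) (ray (lift1 y)) * √(‖y‖ ^ 2 + 1) < 1 := by
  have hx0 : 0 < ‖lift1 x‖ := by rw [norm_lift1]; positivity
  rw [← norm_lift1]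
  refine infDist_ray_mul_norm_lt_one (norm_smul_inv_norm (𝕜 := ℝ) (norm_pos_iff.1 hx0))
    (norm_lift1_sq y) (norm_nonneg y) ?_
  rw [real_inner_smul_left, inv_mul_eq_div, lt_div_iff₀ hx0]
  exact hx

end AngularNbhd

theorem smul_mem_coneHull {V : Type*} [AddCommMonoid V] [Module ℝ V] {M : Set V} {c : ℝ}
    (hc : 0 ≤ c) {v : V} (hv : v ∈ M) : c • v ∈ coneHull M :=
  ⟨1, fun _ => c, fun _ => v, fun _ => hc, fun _ => hv, by simp⟩

theorem coneHull_subset_setOf_inner_nonpos {V : Type*} [NormedAddCommGroup V]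
    [InnerProductSpace ℝ V] {M : Set V} {a : V} (h : ∀ v ∈ M, ⟪a, v⟫ ≤ 0) :
    coneHull M ⊆ {v | ⟪a, v⟫ ≤ 0} := by
  rintro _ ⟨k, c, v, hc, hv, rfl⟩
  simp only [Set.mem_ofPred_eq, inner_sum, real_inner_smul_right]
  exact Finset.sum_nonpos fun i _ => mul_nonpos_of_nonneg_of_nonpos (hc i) (h _ (hv i))

section Homogenization

variable {m : ℕ}

theorem lift0_mem_homog_univ (w : Em m) : lift0 w ∈ homog (univ : Set (Em m)) := by
  have heq : ∀ t : ℝ, 0 < t → t⁻¹ • lift1 (t • w) = lift0 w + t⁻¹ • lift1 0 := fun t ht => by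
    simp [lift1, lift0, ← WithLp.toLp_smul, ← WithLp.toLp_add, ht.ne']
  have hlim : Tendsto (fun t : ℝ => lift0 w + t⁻¹ • lift1 0) atTop (𝓝 (lift0 w)) := by
    simpa using
      ((tendsto_inv_atTop_zero (𝕜 := ℝ)).smul_const (lift1 (0 : Em m))).const_add (lift0 w)
  refine mem_closure_of_tendsto (f := fun t : ℝ => t⁻¹ • lift1 (t • w)) (hlim.congr' ?_) ?_
  · filter_upwards [eventually_gt_atTop 0] with t ht using (heq t ht).symm
  · filter_upwards [eventually_gt_atTop 0] with t ht
    exact smul_mem_coneHull (inv_nonneg.2 ht.le) (mem_image_of_mem _ (mem_univ _))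

theorem one_le_dtH_homog_univ {Z : Set (Em m)} {w : Em m} (hw : w ≠ 0)
    (h : ∀ z ∈ Z, ⟪w, z⟫ ≤ 0) : 1 ≤ dtH (homog Z) (homog (univ : Set (Em m))) := by
  set u := lift0 (‖w‖⁻¹ • w)
  have hu : ‖u‖ = 1 := (norm_lift0 _).trans (norm_smul_inv_norm (𝕜 := ℝ) hw)
  have hbounded {K : Set (Em1 m)} : Bornology.IsBounded (K ∩ closedBall 0 1) :=
    isBounded_closedBall.subset inter_subset_right
  have hzero {Z' : Set (Em m)} : (0 : Em1 m) ∈ homog Z' ∩ closedBall 0 1 :=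
    ⟨subset_closure ⟨0, 0, 0, fun i => i.elim0, fun i => i.elim0, by simp⟩,
      mem_closedBall_self zero_le_one⟩
  have hhalf : homog Z ⊆ {v | ⟪u, v⟫ ≤ 0} :=
    closure_minimal (coneHull_subset_setOf_inner_nonpos <| by
      rintro _ ⟨z, hz, rfl⟩
      rw [inner_lift0_lift1, real_inner_smul_left]
      exact mul_nonpos_of_nonneg_of_nonpos (by positivity) (h z hz))
      (isClosed_le (continuous_const.inner continuous_id) continuous_const)
  calc (1 : ℝ) ≤ infDist u (homog Z ∩ closedBall 0 1) :=
        one_le_infDist_of_forall_inner_nonpos hu ⟨0, hzero⟩ fun v hv => hhalf hv.1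
    _ ≤ dtH (homog Z) (homog univ) := by
        rw [dtH, hausdorffDist_comm]
        exact infDist_le_hausdorffDist_of_mem ⟨lift0_mem_homog_univ _, by simp [hu]⟩
          (hausdorffEDist_ne_top_of_nonempty_of_bounded ⟨0, hzero⟩ ⟨0, hzero⟩ hbounded hbounded)

end Homogenization

theorem IsPreconnected.subset_of_disjoint_frontier {X : Type*} [TopologicalSpace X]
    {s t : Set X} (hs : IsPreconnected s) (hst : (s ∩ t).Nonempty)
    (hfr : Disjoint s (frontier t)) : s ⊆ t := by
  have hint : ∀ x ∈ s, x ∈ closure t → x ∈ interior t := fun x hxs hxt => by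
    by_contra hx
    exact disjoint_left.1 hfr hxs ⟨hxt, hx⟩
  refine (hs.subset_of_closure_inter_subset isOpen_interior ?_ ?_).trans interior_subset
  · obtain ⟨x, hxs, hxt⟩ := hst
    exact ⟨x, hxs, hint x hxs (subset_closure hxt)⟩
  · rintro x ⟨hxt, hxs⟩
    exact hint x hxs (closure_mono interior_subset hxt)

theorem mem_recCone_of_forall_add_smul_mem {V : Type*} [AddCommGroup V] [Module ℝ V]
    [TopologicalSpace V] [IsTopologicalAddGroup V] [ContinuousSMul ℝ V] {Z : Set V}
    (hZc : IsClosed Z) (hZ : Convex ℝ Z) {p d : V} (h : ∀ s : ℝ, 0 ≤ s → p + s • d ∈ Z) :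
    d ∈ recCone Z := by
  intro x hx t ht
  -- `x + t • d + ε • (p - x)` is a convex combination of `x` and `p + (t / ε) • d`
  have hmem : ∀ ε ∈ Ioo (0 : ℝ) 1, x + t • d + ε • (p - x) ∈ Z := fun ε ⟨hε0, hε1⟩ => by
    convert hZ hx (h (t / ε) (by positivity)) (sub_nonneg.2 hε1.le) hε0.le (by ring) using 1
    rw [smul_add, smul_smul, mul_div_cancel₀ t hε0.ne', sub_smul, one_smul, smul_sub]
    abel
  have hlim : Tendsto (fun ε : ℝ => x + t • d + ε • (p - x)) (𝓝[>] 0) (𝓝 (x + t • d)) := by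
    have hcont : Continuous fun ε : ℝ => x + t • d + ε • (p - x) := by fun_prop
    exact (hcont.tendsto' 0 _ (by simp)).mono_left nhdsWithin_le_nhds
  exact hZc.mem_of_tendsto hlim (eventually_of_mem (Ioo_mem_nhdsGT one_pos) hmem)

theorem Convex.exists_ne_zero_inner_sub_nonpos_of_mem_frontier {E : Type*}
    [NormedAddCommGroup E] [InnerProductSpace ℝ E] [FiniteDimensional ℝ E] {s : Set E} {x : E}
    (hs : Convex ℝ s) (hx : x ∈ frontier s) : ∃ w ≠ 0, ∀ z ∈ s, ⟪w, z - x⟫ ≤ 0 := by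
  by_cases hint : (interior s).Nonempty
  · obtain ⟨f, hf⟩ := geometric_hahn_banach_open_point hs.interior isOpen_interior hx.2
    have hfw (v : E) : ⟪(InnerProductSpace.toDual ℝ E).symm f, v⟫ = f v :=
      InnerProductSpace.toDual_symm_apply
    have hcl : closure s ⊆ {v | f v ≤ f x} := by
      rw [← hs.closure_interior_eq_closure_of_nonempty_interior hint]
      exact closure_minimal (fun v hv => (hf v hv).le) (isClosed_le f.continuous continuous_const)
    refine ⟨(InnerProductSpace.toDual ℝ E).symm f, fun h0 => ?_, fun z hz => ?_⟩
    · obtain ⟨a, ha⟩ := hint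
      have := hf a ha
      rw [← hfw, ← hfw, h0, inner_zero_left, inner_zero_left] at this
      exact this.false
    · rw [inner_sub_right, hfw, hfw, sub_nonpos]
      exact hcl (subset_closure hz)
  · have hxspan : x ∈ affineSpan ℝ s :=
      closure_minimal (subset_affineSpan ℝ s) (affineSpan ℝ s).closed_of_finiteDimensional hx.1
    have hdir : (affineSpan ℝ s).direction ≠ ⊤ := fun h => hint <|
      hs.interior_nonempty_iff_affineSpan_eq_top.2 <|
        (AffineSubspace.direction_eq_top_iff_of_nonempty ⟨x, hxspan⟩).1 h
    obtain ⟨w, hw, hw0⟩ := (Submodule.ne_bot_iff _).1 (mt Submodule.orthogonal_eq_bot_iff.1 hdir)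
    refine ⟨w, hw0, fun z hz => ?_⟩
    rw [← vsub_eq_sub, Submodule.inner_left_of_mem_orthogonal
      (AffineSubspace.vsub_mem_direction (subset_affineSpan ℝ s hz) hxspan) hw]

section ConeConvex

variable {E V : Type*} [AddCommGroup E] [Module ℝ E] [AddCommGroup V] [Module ℝ V]

def IsConeConvex (C : Set V) (F : E → V) : Prop :=
  ∀ x₁ x₂ : E, ∀ l : ℝ, l ∈ Set.Ioo (0:ℝ) 1 →
    l • F x₁ + (1 - l) • F x₂ - F (l • x₁ + (1 - l) • x₂) ∈ C

theorem add_mem_of_convex_of_smul_mem {C : Set V} (hCconv : Convex ℝ C)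
    (hCcone : ∀ c ∈ C, ∀ r : ℝ, 0 ≤ r → r • c ∈ C) {a b : V} (ha : a ∈ C) (hb : b ∈ C) :
    a + b ∈ C := by
  convert hCcone _ (hCconv ha hb (by norm_num : (0 : ℝ) ≤ 1 / 2) (by norm_num : (0 : ℝ) ≤ 1 / 2)
    (by norm_num)) 2 (by norm_num) using 1
  module

theorem IsConeConvex.convex_image_add {C : Set V} {F : E → V} {S : Set E}
    (hF : IsConeConvex C F) (hS : Convex ℝ S) (hCconv : Convex ℝ C)
    (hCcone : ∀ c ∈ C, ∀ r : ℝ, 0 ≤ r → r • c ∈ C) : Convex ℝ (F '' S + C) := by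
  refine convex_iff_forall_pos.2 ?_
  rintro _ ⟨_, ⟨x₁, hx₁, rfl⟩, c₁, hc₁, rfl⟩ _ ⟨_, ⟨x₂, hx₂, rfl⟩, c₂, hc₂, rfl⟩ a b ha hb hab
  obtain rfl : b = 1 - a := by linarith
  refine ⟨_, mem_image_of_mem F (hS hx₁ hx₂ ha.le hb.le hab), _,
    add_mem_of_convex_of_smul_mem hCconv hCcone (hF x₁ x₂ a ⟨ha, by linarith⟩)
      (hCconv hc₁ hc₂ ha.le hb.le hab), ?_⟩
  module

theorem IsConeConvex.convexHull_image_add_subset {C : Set V} {F : E → V} {S X : Set E}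
    (hF : IsConeConvex C F) (hS : Convex ℝ S) (hC0 : (0 : V) ∈ C) (hCconv : Convex ℝ C)
    (hCcone : ∀ c ∈ C, ∀ r : ℝ, 0 ≤ r → r • c ∈ C) (hXS : X ⊆ S) :
    convexHull ℝ (F '' X) + C ⊆ F '' S + C := by
  have hX : F '' X ⊆ F '' S + C := fun z hz => ⟨z, image_mono hXS hz, 0, hC0, add_zero z⟩
  have hC : F '' S + C + C ⊆ F '' S + C := by
    rw [add_assoc]
    exact add_subset_add_left fun _ ⟨a, ha, b, hb, hab⟩ =>
      hab ▸ add_mem_of_convex_of_smul_mem hCconv hCcone ha hb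
  exact (add_subset_add_right (convexHull_min hX (hF.convex_image_add hS hCconv hCcone))).trans hC

end ConeConvex

theorem boundary_point_near_boundary_or_recession_direction_general
    {n m : ℕ} (S : Set (Em n)) (hSconv : Convex ℝ S)
    (C : Set (Em m)) (hC0 : (0 : Em m) ∈ C)
    (hCcone : ∀ c ∈ C, ∀ r : ℝ, 0 ≤ r → r • c ∈ C)
    (hCconv : Convex ℝ C)
    (F : Em n → Em m)
    (hFconv : ∀ x₁ x₂ : Em n, ∀ l : ℝ, l ∈ Set.Ioo (0:ℝ) 1 →
      l • F x₁ + (1 - l) • F x₂ - F (l • x₁ + (1 - l) • x₂) ∈ C)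
    (δ : ℝ) (hδ : δ ∈ Set.Ioo (0:ℝ) 1)
    (X : Set (Em n)) (hXS : X ⊆ S)
    (hXsol : dtH (homog (convexHull ℝ (F '' X) + C)) (homog (closure (F '' S + C))) ≤ δ)
    (y : Em m) (hy : y ∈ frontier (convexHull ℝ (F '' X) + C)) :
    (∃ nn ∈ frontier (closure (F '' S + C)), ∃ q : ℝ,
      q = infDist (‖lift1 nn‖⁻¹ • lift1 nn) (ray (lift1 y)) ∧
      q * Real.sqrt (‖y‖ ^ 2 + 1) < 1 ∧
      infDist y (frontier (closure (F '' S + C))) ≤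
        q * (‖y‖ ^ 2 + 1) / (Real.sqrt (1 - q ^ 2) - q * ‖y‖)) ∨
    (y ≠ 0 ∧
      infDist (‖y‖⁻¹ • y) (recCone (closure (F '' S + C))) ≤ (‖lift1 y‖ / ‖y‖) * δ) := by
  have hF : IsConeConvex C F := hFconv
  have hP : Convex ℝ (closure (F '' S + C)) := (hF.convex_image_add hSconv hCconv hCcone).closure
  have hyP : y ∈ closure (F '' S + C) :=
    closure_mono (hF.convexHull_image_add_subset hSconv hC0 hCconv hCcone hXS)
      (frontier_subset_closure hy)
  by_cases hnear : ∃ nn ∈ frontier (closure (F '' S + C)),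
      infDist (‖lift1 nn‖⁻¹ • lift1 nn) (ray (lift1 y)) * √(‖y‖ ^ 2 + 1) < 1
  · obtain ⟨nn, hnn, hq⟩ := hnear
    exact .inl ⟨nn, hnn, _, rfl, hq,
      (infDist_le_dist_of_mem hnn).trans (dist_le_of_infDist_ray_mul_lt_one rfl hq)⟩
  have hsub : angularNbhd y ⊆ closure (F '' S + C) :=
    (convex_angularNbhd y).isPreconnected.subset_of_disjoint_frontier
      ⟨y, by simpa using smul_mem_angularNbhd y one_half_lt_one.le, hyP⟩
      (disjoint_left.2 fun x hx hfr =>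
        hnear ⟨x, hfr, infDist_ray_mul_lt_one_of_mem_angularNbhd hx⟩)
  rcases eq_or_ne y 0 with rfl | hy0
  · obtain ⟨w, hw0, hw⟩ :=
      ((convex_convexHull ℝ _).add hCconv).exists_ne_zero_inner_sub_nonpos_of_mem_frontier hy
    have hPuniv : closure (F '' S + C) = univ := by
      rwa [angularNbhd_zero, univ_subset_iff] at hsub
    have := one_le_dtH_homog_univ hw0 fun z hz => by simpa using hw z hz
    rw [← hPuniv] at this
    linarith [hδ.2]
  · refine .inr ⟨hy0, ?_⟩
    have hrec : ‖y‖⁻¹ • y ∈ recCone (closure (F '' S + C)) :=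
      mem_recCone_of_forall_add_smul_mem (p := y) isClosed_closure hP fun s hs => hsub <| by
        rw [show y + s • (‖y‖⁻¹ • y) = (1 + s * ‖y‖⁻¹) • y by module]
        exact smul_mem_angularNbhd y (le_add_of_le_of_nonneg (by norm_num) (by positivity))
    rw [infDist_zero_of_mem hrec]
    exact mul_nonneg (by positivity) hδ.1.le

/-- Any boundary point `y` of the approximate upper image `P_X` of a homogeneous
`δ`-solution either (i) has distance to `bd 𝒫` bounded by `α(‖y‖, q)` where
`q = d((n,1)/‖(n,1)‖, cone{(y,1)})` for some `n ∈ bd 𝒫`, or (ii) `y/‖y‖` is within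
`(‖(y,1)‖/‖y‖)·δ` of the recession cone `0⁺𝒫`. -/
theorem boundary_point_near_boundary_or_recession_direction
    {n m : ℕ} (S : Set (Em n)) (hSne : S.Nonempty) (hSconv : Convex ℝ S)
    (C : Set (Em m)) (hC0 : (0 : Em m) ∈ C)
    (hCcone : ∀ c ∈ C, ∀ r : ℝ, 0 ≤ r → r • c ∈ C)
    (hCconv : Convex ℝ C) (hCclosed : IsClosed C)
    (hCpointed : C ∩ (-C) ⊆ {0}) (hCnontrivial : C ≠ {0})
    (F : Em n → Em m)
    (hFconv : ∀ x₁ x₂ : Em n, ∀ l : ℝ, l ∈ Set.Ioo (0:ℝ) 1 →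
      l • F x₁ + (1 - l) • F x₂ - F (l • x₁ + (1 - l) • x₂) ∈ C)
    (δ : ℝ) (hδ : δ ∈ Set.Ioo (0:ℝ) 1)
    (X : Set (Em n)) (hXne : X.Nonempty) (hXS : X ⊆ S)
    (hXsol : dtH (homog (convexHull ℝ (F '' X) + C)) (homog (closure (F '' S + C))) ≤ δ)
    (y : Em m) (hy : y ∈ frontier (convexHull ℝ (F '' X) + C)) :
    (∃ nn ∈ frontier (closure (F '' S + C)), ∃ q : ℝ,
      q = infDist (‖lift1 nn‖⁻¹ • lift1 nn) (ray (lift1 y)) ∧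
      q * Real.sqrt (‖y‖ ^ 2 + 1) < 1 ∧
      infDist y (frontier (closure (F '' S + C))) ≤
        q * (‖y‖ ^ 2 + 1) / (Real.sqrt (1 - q ^ 2) - q * ‖y‖)) ∨
    (y ≠ 0 ∧
      infDist (‖y‖⁻¹ • y) (recCone (closure (F '' S + C))) ≤ (‖lift1 y‖ / ‖y‖) * δ) :=
  boundary_point_near_boundary_or_recession_direction_general S hSconv C hC0 hCcone hCconv F hFconv
    δ hδ X hXS hXsol y hy
end
end

section
/- Let q, δ, y, r be real numbers with 0 < q ≤ δ < 1 and 0 ≤ y ≤ r < √(1/δ² − 1). Then q(y² + 1)/(√(1 − q²) − q·y) ≤ δ(r² + 1)/(√(1 − δ²) − δ·r). -/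
/-- If `0 < q ≤ δ < 1` and `0 ≤ y ≤ r < √(1/δ² − 1)`, then
`q(y² + 1)/(√(1 − q²) − q·y) ≤ δ(r² + 1)/(√(1 − δ²) − δ·r)`. -/
theorem error_bound_monotone_comparison (q δ y r : ℝ) (h0q : 0 < q) (hqδ : q ≤ δ)
    (hδ1 : δ < 1) (h0y : 0 ≤ y) (hyr : y ≤ r) (hr : r < Real.sqrt (1 / δ ^ 2 - 1)) :
    q * (y ^ 2 + 1) / (Real.sqrt (1 - q ^ 2) - q * y) ≤
      δ * (r ^ 2 + 1) / (Real.sqrt (1 - δ ^ 2) - δ * r) := by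
  have h0δ : (0:ℝ) < δ := lt_of_lt_of_le h0q hqδ
  have hs : Real.sqrt (1 / δ ^ 2 - 1) = Real.sqrt (1 - δ ^ 2) / δ := by
    rw [show (1 / δ ^ 2 - 1) = (1 - δ ^ 2) / δ ^ 2 by field_simp,
      Real.sqrt_div (by nlinarith), Real.sqrt_sq h0δ.le]
  have hDpos : 0 < Real.sqrt (1 - δ ^ 2) - δ * r := by
    rw [hs] at hr
    have := (lt_div_iff₀ h0δ).mp hr
    linarith
  have hsq : Real.sqrt (1 - δ ^ 2) ≤ Real.sqrt (1 - q ^ 2) :=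
    Real.sqrt_le_sqrt (by nlinarith)
  have hDC : Real.sqrt (1 - δ ^ 2) - δ * r ≤ Real.sqrt (1 - q ^ 2) - q * y := by
    have : q * y ≤ δ * r := mul_le_mul hqδ hyr h0y h0δ.le
    linarith
  have hAB : q * (y ^ 2 + 1) ≤ δ * (r ^ 2 + 1) := by nlinarith [mul_le_mul_of_nonneg_left (by nlinarith : y ^ 2 ≤ r ^ 2) h0q.le]
  exact div_le_div₀ (by positivity) hAB hDpos hDC
end
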